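/- arXiv:2603.22900 — 2 statements merged into one kernel-verified Lean document; each statement's English description precedes it below -/
import Mathlib

section
/- Under common support, conditionally independent censoring, and correctly specified π_0, G, and outcome model, the scaled variance of the single-sample IPCW-IPS term equals E_{p(x)π_0(a|x)}[w(x,a)² σ²(x,a,t)] + E_{p(x)}[Var_{π_0(a|x)}[w(x,a)S(x,a,t)]] + Var_{p(x)}[S^{π_e}(x,t)], where w(x,a) = π_e(a|x)/π_0(a|x), σ²(x,a,t) = S(x,a,t)/G(t|x,a) − S(x,a,t)², and S^{π_e}(x,t) = Σ_a π_e(a|x) S(x,a,t). -/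
/-!
Given `(x, a)`, the IPCW term is `w · 1{L > t} 1{C > t} / G`, so by conditional independence of
`L` and `C` its mean is `w S` (the weight `1/G` cancels the censoring) and its second moment is
`w² S / G`. Its conditional variance is therefore `w² σ²`, and the law of total variance, applied
first over `a ~ π₀(·|x)` and then over `x ~ p`, produces the three terms; in the last one the
importance weights turn `∑ₐ π₀ w S` into `∑ₐ πₑ S = S^{πₑ}`, which is where common support enters.
-/

open MeasureTheory Finset

/-- Law of total variance for a two-stage finite mixture, with conditional variances `v` and
conditional means `m`. -/
theorem sum_second_moment_sub_sq_eq_total_variance {X A : Type*} [Fintype X] [Fintype A]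
    (p : X → ℝ) (q v m : X → A → ℝ) :
    (∑ x, p x * ∑ a, q x a * (v x a + m x a ^ 2)) - (∑ x, p x * ∑ a, q x a * m x a) ^ 2
      = (∑ x, p x * ∑ a, q x a * v x a)
        + (∑ x, p x * ((∑ a, q x a * m x a ^ 2) - (∑ a, q x a * m x a) ^ 2))
        + ((∑ x, p x * (∑ a, q x a * m x a) ^ 2) - (∑ x, p x * ∑ a, q x a * m x a) ^ 2) := by
  simp only [mul_add, mul_sub, sum_add_distrib, sum_sub_distrib]
  ring

theorem sum_mul_div_mul_eq_sum_mul_of_support {A : Type*} [Fintype A] {q r : A → ℝ}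
    (hr : ∀ a, 0 ≤ r a) (hsupp : ∀ a, 0 < r a → 0 < q a) (f : A → ℝ) :
    ∑ a, q a * (r a / q a * f a) = ∑ a, r a * f a := by
  refine sum_congr rfl fun a _ => ?_
  rcases (hr a).eq_or_lt with hr0 | hrpos
  · simp [← hr0]
  · field_simp [(hsupp a hrpos).ne']

section IPCW

variable {Ω : Type*} [MeasurableSpace Ω] {ν : Measure Ω}

theorem integral_mul_indicator_one_div (c g : ℝ) {s : Set Ω} (hs : MeasurableSet s) :
    ∫ ω, c * s.indicator (fun _ => (1 : ℝ)) ω / g ∂ν = c / g * ν.real s := by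
  have h : (fun ω => c * s.indicator (fun _ => (1 : ℝ)) ω / g) = s.indicator fun _ => c / g := by
    ext ω
    by_cases hω : ω ∈ s <;> simp [hω]
  rw [h, integral_indicator_const _ hs, smul_eq_mul, mul_comm]

theorem integral_mul_indicator_one_div_sq (c g : ℝ) {s : Set Ω} (hs : MeasurableSet s) :
    ∫ ω, (c * s.indicator (fun _ => (1 : ℝ)) ω / g) ^ 2 ∂ν = (c / g) ^ 2 * ν.real s := by
  have h : (fun ω => (c * s.indicator (fun _ => (1 : ℝ)) ω / g) ^ 2)
      = s.indicator fun _ => (c / g) ^ 2 := by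
    ext ω
    by_cases hω : ω ∈ s <;> simp [hω, div_pow]
  rw [h, integral_indicator_const _ hs, smul_eq_mul, mul_comm]

variable {L C : Ω → ℝ} {t S G : ℝ}

theorem measurableSet_lt_min (hL : Measurable L) (hC : Measurable C) :
    MeasurableSet {ω | t < min (L ω) (C ω)} :=
  measurableSet_lt measurable_const (hL.min hC)

theorem measureReal_lt_min_eq_mul
    (hInd : ν {ω | t < L ω ∧ t < C ω} = ν {ω | t < L ω} * ν {ω | t < C ω}) :
    ν.real {ω | t < min (L ω) (C ω)} = ν.real {ω | t < L ω} * ν.real {ω | t < C ω} := by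
  simp only [lt_min_iff, measureReal_def, hInd, ENNReal.toReal_mul]

theorem integral_ipcw (hL : Measurable L) (hC : Measurable C)
    (hInd : ν {ω | t < L ω ∧ t < C ω} = ν {ω | t < L ω} * ν {ω | t < C ω})
    (hS : S = ν.real {ω | t < L ω}) (hG : G = ν.real {ω | t < C ω}) (hG0 : G ≠ 0) (w : ℝ) :
    ∫ ω, w * {ω | t < min (L ω) (C ω)}.indicator (fun _ => (1 : ℝ)) ω / G ∂ν = w * S := by
  rw [integral_mul_indicator_one_div _ _ (measurableSet_lt_min hL hC),
    measureReal_lt_min_eq_mul hInd, ← hS, ← hG]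
  field_simp

theorem integral_ipcw_sq (hL : Measurable L) (hC : Measurable C)
    (hInd : ν {ω | t < L ω ∧ t < C ω} = ν {ω | t < L ω} * ν {ω | t < C ω})
    (hS : S = ν.real {ω | t < L ω}) (hG : G = ν.real {ω | t < C ω}) (hG0 : G ≠ 0) (w : ℝ) :
    ∫ ω, (w * {ω | t < min (L ω) (C ω)}.indicator (fun _ => (1 : ℝ)) ω / G) ^ 2 ∂ν
      = w ^ 2 * S / G := by
  rw [integral_mul_indicator_one_div_sq _ _ (measurableSet_lt_min hL hC),
    measureReal_lt_min_eq_mul hInd, ← hS, ← hG]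
  field_simp

end IPCW

theorem ipcw_ips_variance_general
    {X A Ω : Type*} [Fintype X] [Fintype A] [MeasurableSpace Ω]
    (p : X → ℝ)
    (π0 πe : X → A → ℝ)
    (hπe : ∀ x a, 0 ≤ πe x a)
    (hsupp : ∀ x a, 0 < πe x a → 0 < π0 x a)
    (μ : X → A → Measure Ω)
    (L C : Ω → ℝ) (hL : Measurable L) (hC : Measurable C)
    (hInd : ∀ x a (s u : ℝ), μ x a {ω | s < L ω ∧ u < C ω} =
      μ x a {ω | s < L ω} * μ x a {ω | u < C ω})
    (t : ℝ)
    (S G : X → A → ℝ)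
    (hS : ∀ x a, S x a = (μ x a {ω | t < L ω}).toReal)
    (hGdef : ∀ x a, G x a = (μ x a {ω | t < C ω}).toReal)
    (hG : ∀ x a, 0 < G x a)
    (w : X → A → ℝ) (hw : ∀ x a, w x a = πe x a / π0 x a) :
    (∑ x, p x * ∑ a, π0 x a *
        ∫ ω, (w x a *
          Set.indicator {ω : Ω | t < min (L ω) (C ω)} (fun _ => (1 : ℝ)) ω / G x a) ^ 2 ∂(μ x a))
      - (∑ x, p x * ∑ a, π0 x a *
          ∫ ω, w x a *
            Set.indicator {ω : Ω | t < min (L ω) (C ω)} (fun _ => (1 : ℝ)) ω / G x a ∂(μ x a)) ^ 2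
    = (∑ x, p x * ∑ a, π0 x a * (w x a ^ 2 * (S x a / G x a - S x a ^ 2)))
      + (∑ x, p x *
          ((∑ a, π0 x a * (w x a * S x a) ^ 2) - (∑ a, π0 x a * (w x a * S x a)) ^ 2))
      + ((∑ x, p x * (∑ a, πe x a * S x a) ^ 2) - (∑ x, p x * ∑ a, πe x a * S x a) ^ 2) := by
  have hmean : ∀ x a, ∫ ω, w x a *
      Set.indicator {ω : Ω | t < min (L ω) (C ω)} (fun _ => (1 : ℝ)) ω / G x a ∂(μ x a)
        = w x a * S x a := fun x a =>
    integral_ipcw hL hC (hInd x a t t) (hS x a) (hGdef x a) (hG x a).ne' _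
  have hsecond : ∀ x a, ∫ ω, (w x a *
      Set.indicator {ω : Ω | t < min (L ω) (C ω)} (fun _ => (1 : ℝ)) ω / G x a) ^ 2 ∂(μ x a)
        = w x a ^ 2 * (S x a / G x a - S x a ^ 2) + (w x a * S x a) ^ 2 := fun x a => by
    rw [integral_ipcw_sq hL hC (hInd x a t t) (hS x a) (hGdef x a) (hG x a).ne']
    ring
  have hreweight : ∀ x, ∑ a, π0 x a * (w x a * S x a) = ∑ a, πe x a * S x a := fun x => by
    simp only [hw]
    exact sum_mul_div_mul_eq_sum_mul_of_support (hπe x) (hsupp x) _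
  simp only [hmean, hsecond]
  rw [sum_second_moment_sub_sq_eq_total_variance]
  simp only [hreweight]

/-- Variance decomposition of the single-sample IPCW-IPS term. -/
theorem ipcw_ips_variance
    {X A Ω : Type*} [Fintype X] [Fintype A] [MeasurableSpace Ω]
    (p : X → ℝ) (hp : ∀ x, 0 ≤ p x) (hp1 : ∑ x, p x = 1)
    (π0 πe : X → A → ℝ)
    (hπ0 : ∀ x a, 0 ≤ π0 x a) (hπ0s : ∀ x, ∑ a, π0 x a = 1)
    (hπe : ∀ x a, 0 ≤ πe x a) (hπes : ∀ x, ∑ a, πe x a = 1)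
    (hsupp : ∀ x a, 0 < πe x a → 0 < π0 x a)
    (μ : X → A → Measure Ω) [∀ x a, IsProbabilityMeasure (μ x a)]
    (L C : Ω → ℝ) (hL : Measurable L) (hC : Measurable C)
    (hInd : ∀ x a (s u : ℝ), μ x a {ω | s < L ω ∧ u < C ω} =
      μ x a {ω | s < L ω} * μ x a {ω | u < C ω})
    (t : ℝ)
    (S G : X → A → ℝ)
    (hS : ∀ x a, S x a = (μ x a {ω | t < L ω}).toReal)
    (hGdef : ∀ x a, G x a = (μ x a {ω | t < C ω}).toReal)
    (hG : ∀ x a, 0 < G x a)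
    (w : X → A → ℝ) (hw : ∀ x a, w x a = πe x a / π0 x a) :
    (∑ x, p x * ∑ a, π0 x a *
        ∫ ω, (w x a *
          Set.indicator {ω : Ω | t < min (L ω) (C ω)} (fun _ => (1 : ℝ)) ω / G x a) ^ 2 ∂(μ x a))
      - (∑ x, p x * ∑ a, π0 x a *
          ∫ ω, w x a *
            Set.indicator {ω : Ω | t < min (L ω) (C ω)} (fun _ => (1 : ℝ)) ω / G x a ∂(μ x a)) ^ 2
    = (∑ x, p x * ∑ a, π0 x a * (w x a ^ 2 * (S x a / G x a - S x a ^ 2)))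
      + (∑ x, p x *
          ((∑ a, π0 x a * (w x a * S x a) ^ 2) - (∑ a, π0 x a * (w x a * S x a)) ^ 2))
      + ((∑ x, p x * (∑ a, πe x a * S x a) ^ 2) - (∑ x, p x * ∑ a, πe x a * S x a) ^ 2) :=
  ipcw_ips_variance_general p π0 πe hπe hsupp μ L C hL hC hInd t S G hS hGdef hG w hw
end

section
/- Under common support, conditionally independent censoring, and correct specification of all nuisance models, the variance of the IPCW-IPS estimator minus the variance of the IPCW-DR estimator equals E_{p(x)}[Var_{π_0(a|x)}[w(x,a)S(x,a,t)]], which is non-negative; hence Var[IPCW-DR] ≤ Var[IPCW-IPS]. -/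
/-!
Given `(x, a)`, independent censoring makes `P(min(L, C) > t) = S G`, so the IPCW term
`Z = w 1{min(L, C) > t} / G` has mean `w S`. The DR term is `Z` shifted by the constant `V − w S`,
where `V = Σ πe S`; hence it has mean `V` and second moment `E[Z²] − (w S)² + V²`. Importance
weighting gives `V = Σ π0 (w S)`, so both estimators have the same mean, and the difference of
their second moments is the `π0`-variance of `w S`, which is nonnegative by Jensen's inequality.
-/

open MeasureTheory Finset

lemma integral_comp_indicator_one {Ω : Type*} [MeasurableSpace Ω] (μ : Measure Ω)
    [IsProbabilityMeasure μ] {s : Set Ω} (hs : MeasurableSet s) (g : ℝ → ℝ) :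
    ∫ ω, g (s.indicator (fun _ => (1 : ℝ)) ω) ∂μ = (g 1 - g 0) * μ.real s + g 0 := by
  have hg : (fun ω => g (s.indicator (fun _ => (1 : ℝ)) ω))
      = fun ω => s.indicator (fun _ => g 1 - g 0) ω + g 0 := by
    ext ω
    by_cases h : ω ∈ s <;> simp [h]
  rw [hg, integral_add ((integrable_const _).indicator hs) (integrable_const _),
    integral_indicator_const _ hs, integral_const, probReal_univ, smul_eq_mul, smul_eq_mul,
    one_mul, mul_comm]

lemma measureReal_lt_min_of_indep {Ω : Type*} [MeasurableSpace Ω] {μ : Measure Ω}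
    {L C : Ω → ℝ} {t : ℝ}
    (hInd : μ {ω | t < L ω ∧ t < C ω} = μ {ω | t < L ω} * μ {ω | t < C ω}) :
    μ.real {ω | t < min (L ω) (C ω)} = μ.real {ω | t < L ω} * μ.real {ω | t < C ω} := by
  simp only [measureReal_def, lt_min_iff, hInd, ENNReal.toReal_mul]

section IPCWMoments

variable {Ω : Type*} [MeasurableSpace Ω] (μ : Measure Ω) [IsProbabilityMeasure μ] {E : Set Ω}
  {S G : ℝ} (w c : ℝ)

lemma integral_ipcw_s8 (hE : MeasurableSet E) (hEG : μ.real E = S * G) (hG : G ≠ 0) :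
    ∫ ω, w * E.indicator (fun _ => (1 : ℝ)) ω / G ∂μ = w * S := by
  rw [integral_comp_indicator_one μ hE (fun z => w * z / G), hEG]
  field_simp
  ring

lemma integral_ipcw_sq_s8 (hE : MeasurableSet E) (hEG : μ.real E = S * G) (hG : G ≠ 0) :
    ∫ ω, (w * E.indicator (fun _ => (1 : ℝ)) ω / G) ^ 2 ∂μ = w ^ 2 * S / G := by
  rw [integral_comp_indicator_one μ hE (fun z => (w * z / G) ^ 2), hEG]
  field_simp
  ring

lemma integral_ipcw_dr (hE : MeasurableSet E) (hEG : μ.real E = S * G) (hG : G ≠ 0) :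
    ∫ ω, (w * (E.indicator (fun _ => (1 : ℝ)) ω / G - S) + c) ∂μ = c := by
  rw [integral_comp_indicator_one μ hE (fun z => w * (z / G - S) + c), hEG]
  field_simp
  ring

lemma integral_ipcw_dr_sq (hE : MeasurableSet E) (hEG : μ.real E = S * G) (hG : G ≠ 0) :
    ∫ ω, (w * (E.indicator (fun _ => (1 : ℝ)) ω / G - S) + c) ^ 2 ∂μ
      = w ^ 2 * S / G - (w * S) ^ 2 + c ^ 2 := by
  rw [integral_comp_indicator_one μ hE (fun z => (w * (z / G - S) + c) ^ 2), hEG]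
  field_simp
  ring

end IPCWMoments

lemma mul_div_cancel_of_pos_imp_pos {𝕜 : Type*} [Field 𝕜] [LinearOrder 𝕜]
    [IsStrictOrderedRing 𝕜] {q r : 𝕜} (hr : 0 ≤ r) (hsupp : 0 < r → 0 < q) :
    q * (r / q) = r := by
  rcases eq_or_ne q 0 with hq | hq
  · have hr0 : r = 0 := le_antisymm (not_lt.mp fun h => (hsupp h).ne' hq) hr
    simp [hq, hr0]
  · exact mul_div_cancel₀ r hq

lemma sq_sum_le_sum_mul_sq {𝕜 ι : Type*} [Field 𝕜] [LinearOrder 𝕜] [IsStrictOrderedRing 𝕜]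
    (s : Finset ι) {q : ι → 𝕜} (hq : ∀ i ∈ s, 0 ≤ q i) (hq1 : ∑ i ∈ s, q i = 1) (f : ι → 𝕜) :
    (∑ i ∈ s, q i * f i) ^ 2 ≤ ∑ i ∈ s, q i * f i ^ 2 :=
  (even_two.convexOn_pow (𝕜 := 𝕜)).map_sum_le hq hq1 fun _ _ => Set.mem_univ _

lemma sum_variance_sub_sum_variance_shift {R X A : Type*} [CommRing R] [Fintype X] [Fintype A]
    (p : X → R) (q : X → A → R) (hq : ∀ x, ∑ a, q x a = 1) (m M : X → A → R) (V : X → R)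
    (hV : ∀ x, ∑ a, q x a * m x a = V x) :
    ((∑ x, p x * ∑ a, q x a * M x a) - (∑ x, p x * ∑ a, q x a * m x a) ^ 2)
      - ((∑ x, p x * ∑ a, q x a * (M x a - m x a ^ 2 + V x ^ 2))
        - (∑ x, p x * ∑ a, q x a * V x) ^ 2)
      = ∑ x, p x * ((∑ a, q x a * m x a ^ 2) - (∑ a, q x a * m x a) ^ 2) := by
  have hconst : ∀ x (c : R), ∑ a, q x a * c = c := fun x c => by rw [← sum_mul, hq, one_mul]
  simp only [mul_add, mul_sub, sum_add_distrib, sum_sub_distrib, hconst, hV]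
  ring

theorem ipcw_dr_variance_reduction_general
    {X A Ω : Type*} [Fintype X] [Fintype A] [MeasurableSpace Ω]
    (p : X → ℝ) (hp : ∀ x, 0 ≤ p x)
    (π0 πe : X → A → ℝ)
    (hπ0 : ∀ x a, 0 ≤ π0 x a) (hπ0s : ∀ x, ∑ a, π0 x a = 1)
    (hπe : ∀ x a, 0 ≤ πe x a)
    (hsupp : ∀ x a, 0 < πe x a → 0 < π0 x a)
    (μ : X → A → Measure Ω) [∀ x a, IsProbabilityMeasure (μ x a)]
    (L C : Ω → ℝ) (hL : Measurable L) (hC : Measurable C)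
    (hInd : ∀ x a (s u : ℝ), μ x a {ω | s < L ω ∧ u < C ω} =
      μ x a {ω | s < L ω} * μ x a {ω | u < C ω})
    (t : ℝ)
    (S G : X → A → ℝ)
    (hS : ∀ x a, S x a = (μ x a {ω | t < L ω}).toReal)
    (hGdef : ∀ x a, G x a = (μ x a {ω | t < C ω}).toReal)
    (hG : ∀ x a, 0 < G x a)
    (w : X → A → ℝ) (hw : ∀ x a, w x a = πe x a / π0 x a)
    (VarIPS VarDR : ℝ)
    (hIPS : VarIPS =
      (∑ x, p x * ∑ a, π0 x a *
        ∫ ω, (w x a *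
          Set.indicator {ω : Ω | t < min (L ω) (C ω)} (fun _ => (1 : ℝ)) ω / G x a) ^ 2 ∂(μ x a))
      - (∑ x, p x * ∑ a, π0 x a *
          ∫ ω, w x a *
            Set.indicator {ω : Ω | t < min (L ω) (C ω)} (fun _ => (1 : ℝ)) ω / G x a ∂(μ x a)) ^ 2)
    (hDR : VarDR =
      (∑ x, p x * ∑ a, π0 x a *
        ∫ ω, (w x a *
            (Set.indicator {ω : Ω | t < min (L ω) (C ω)} (fun _ => (1 : ℝ)) ω / G x a - S x a)
          + ∑ a', πe x a' * S x a') ^ 2 ∂(μ x a))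
      - (∑ x, p x * ∑ a, π0 x a *
          ∫ ω, (w x a *
              (Set.indicator {ω : Ω | t < min (L ω) (C ω)} (fun _ => (1 : ℝ)) ω / G x a - S x a)
            + ∑ a', πe x a' * S x a') ∂(μ x a)) ^ 2) :
    (VarIPS - VarDR =
        ∑ x, p x *
          ((∑ a, π0 x a * (w x a * S x a) ^ 2) - (∑ a, π0 x a * (w x a * S x a)) ^ 2))
    ∧ 0 ≤ ∑ x, p x *
          ((∑ a, π0 x a * (w x a * S x a) ^ 2) - (∑ a, π0 x a * (w x a * S x a)) ^ 2)
    ∧ VarDR ≤ VarIPS := by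
  have hE : MeasurableSet {ω | t < min (L ω) (C ω)} := measurableSet_lt measurable_const (hL.min hC)
  have hEG : ∀ x a, (μ x a).real {ω | t < min (L ω) (C ω)} = S x a * G x a := fun x a => by
    rw [measureReal_lt_min_of_indep (hInd x a t t), hS, hGdef, measureReal_def, measureReal_def]
  have hm1 := fun x a => integral_ipcw_s8 (μ x a) (w x a) hE (hEG x a) (hG x a).ne'
  have hm2 := fun x a => integral_ipcw_sq_s8 (μ x a) (w x a) hE (hEG x a) (hG x a).ne'
  have hm3 := fun x a => integral_ipcw_dr (μ x a) (w x a) (∑ a', πe x a' * S x a') hE (hEG x a)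
    (hG x a).ne'
  have hm4 := fun x a => integral_ipcw_dr_sq (μ x a) (w x a) (∑ a', πe x a' * S x a') hE
    (hEG x a) (hG x a).ne'
  simp only [hm1, hm2] at hIPS
  simp only [hm3, hm4] at hDR
  have hV : ∀ x, ∑ a, π0 x a * (w x a * S x a) = ∑ a, πe x a * S x a := fun x =>
    sum_congr rfl fun a _ => by
      rw [← mul_assoc, hw, mul_div_cancel_of_pos_imp_pos (hπe x a) (hsupp x a)]
  have hdiff := sum_variance_sub_sum_variance_shift p π0 hπ0s (fun x a => w x a * S x a)
    (fun x a => w x a ^ 2 * S x a / G x a) _ hV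
  beta_reduce at hdiff
  rw [← hIPS, ← hDR] at hdiff
  have hnonneg : 0 ≤ ∑ x, p x *
      ((∑ a, π0 x a * (w x a * S x a) ^ 2) - (∑ a, π0 x a * (w x a * S x a)) ^ 2) :=
    sum_nonneg fun x _ => mul_nonneg (hp x)
      (sub_nonneg.mpr (sq_sum_le_sum_mul_sq _ (fun a _ => hπ0 x a) (hπ0s x) _))
  exact ⟨hdiff, hnonneg, by linarith⟩

/-- Variance reduction of IPCW-DR over IPCW-IPS: the difference of variances
equals `E_p[Var_{π0}[w S]] ≥ 0`, hence `Var[IPCW-DR] ≤ Var[IPCW-IPS]`. -/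
theorem ipcw_dr_variance_reduction
    {X A Ω : Type*} [Fintype X] [Fintype A] [MeasurableSpace Ω]
    (p : X → ℝ) (hp : ∀ x, 0 ≤ p x) (hp1 : ∑ x, p x = 1)
    (π0 πe : X → A → ℝ)
    (hπ0 : ∀ x a, 0 ≤ π0 x a) (hπ0s : ∀ x, ∑ a, π0 x a = 1)
    (hπe : ∀ x a, 0 ≤ πe x a) (hπes : ∀ x, ∑ a, πe x a = 1)
    (hsupp : ∀ x a, 0 < πe x a → 0 < π0 x a)
    (μ : X → A → Measure Ω) [∀ x a, IsProbabilityMeasure (μ x a)]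
    (L C : Ω → ℝ) (hL : Measurable L) (hC : Measurable C)
    (hInd : ∀ x a (s u : ℝ), μ x a {ω | s < L ω ∧ u < C ω} =
      μ x a {ω | s < L ω} * μ x a {ω | u < C ω})
    (t : ℝ)
    (S G : X → A → ℝ)
    (hS : ∀ x a, S x a = (μ x a {ω | t < L ω}).toReal)
    (hGdef : ∀ x a, G x a = (μ x a {ω | t < C ω}).toReal)
    (hG : ∀ x a, 0 < G x a)
    (w : X → A → ℝ) (hw : ∀ x a, w x a = πe x a / π0 x a)
    (VarIPS VarDR : ℝ)
    (hIPS : VarIPS =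
      (∑ x, p x * ∑ a, π0 x a *
        ∫ ω, (w x a *
          Set.indicator {ω : Ω | t < min (L ω) (C ω)} (fun _ => (1 : ℝ)) ω / G x a) ^ 2 ∂(μ x a))
      - (∑ x, p x * ∑ a, π0 x a *
          ∫ ω, w x a *
            Set.indicator {ω : Ω | t < min (L ω) (C ω)} (fun _ => (1 : ℝ)) ω / G x a ∂(μ x a)) ^ 2)
    (hDR : VarDR =
      (∑ x, p x * ∑ a, π0 x a *
        ∫ ω, (w x a *
            (Set.indicator {ω : Ω | t < min (L ω) (C ω)} (fun _ => (1 : ℝ)) ω / G x a - S x a)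
          + ∑ a', πe x a' * S x a') ^ 2 ∂(μ x a))
      - (∑ x, p x * ∑ a, π0 x a *
          ∫ ω, (w x a *
              (Set.indicator {ω : Ω | t < min (L ω) (C ω)} (fun _ => (1 : ℝ)) ω / G x a - S x a)
            + ∑ a', πe x a' * S x a') ∂(μ x a)) ^ 2) :
    (VarIPS - VarDR =
        ∑ x, p x *
          ((∑ a, π0 x a * (w x a * S x a) ^ 2) - (∑ a, π0 x a * (w x a * S x a)) ^ 2))
    ∧ 0 ≤ ∑ x, p x *
          ((∑ a, π0 x a * (w x a * S x a) ^ 2) - (∑ a, π0 x a * (w x a * S x a)) ^ 2)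
    ∧ VarDR ≤ VarIPS :=
  ipcw_dr_variance_reduction_general p hp π0 πe hπ0 hπ0s hπe hsupp μ L C hL hC hInd t S G hS hGdef
    hG w hw VarIPS VarDR hIPS hDR
end
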